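/- (Theorem 2, input-shunt-capacitor design: plug-and-play stability.) Fix reals D ∈ (0,1], L > 0, C > 0, P > 0, V̄₁ > 0, V̄₂ > 0, V̄_{c1} > 0, V̄_{c2} > 0. For R > 0 and C_s > 0 define the real 6×6 matrix A(R, C_s), in the state order (v_{c1}, i₁, v₁, v_{c2}, i₂, v₂), with rows: row 1 = (−2/(C_s·R), −1/C_s, 0, 1/(C_s·R), 0, 0); row 2 = (D/L, 0, −1/L, 0, 0, 0); row 3 = (0, 1/C, P/(C·V̄₁²), 0, 0, 0); row 4 = (1/(C_s·R), 0, 0, −1/(C_s·R), −1/C_s, 0); row 5 = (0, 0, 0, D/L, 0, −1/L); row 6 = (0, 0, 0, 0, 1/C, P/(C·V̄₂²)); and the 6×2 input matrix B with B(2,1) = V̄_{c1}/L, B(5,2) = V̄_{c2}/L and all other entries zero. Then there exist feedback gains F₁, F₂ ∈ ℝ³ and a capacitance C_s > 0 such that, with the block-diagonal feedback u = (F₁·(v_{c1}, i₁, v₁), F₂·(v_{c2}, i₂, v₂)), the closed-loop matrix A(R, C_s) + B·F is Hurwitz for all line resistances R > 0. -/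

import Mathlib

/-!
With the shunt capacitor in place, each converter's own feedback can cancel the term through
which its input-capacitor voltage drives its inductor current. The converter states then evolve
independently of the network, so in the order `(v_{c1}, v_{c2} | i₁, v₁ | i₂, v₂)` the closed-loop
matrix is block upper triangular. Its spectrum is that of the diagonal blocks: the passive
resistive-capacitive network block (trace `< 0`, determinant `> 0` for every `R > 0`) and the two
converter blocks, whose poles the gains place at the roots of `s² + s + 1`.
-/

/-- A real square matrix is Hurwitz if every complex eigenvalue has strictly
negative real part. -/
def Matrix.IsHurwitz {n : Type*} [Fintype n] [DecidableEq n]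
    (M : Matrix n n ℝ) : Prop :=
  ∀ μ ∈ spectrum ℂ (M.map Complex.ofReal), μ.re < 0

/-- Open-loop state matrix of two cascaded buck converters with CPLs, each
augmented with a shunt capacitor `C_s` at its input, with line resistance `R`;
state order `(v_{c1}, i₁, v₁, v_{c2}, i₂, v₂)`. -/
noncomputable def inputCapNetwork (D L C P Vbar₁ Vbar₂ R Cs : ℝ) :
    Matrix (Fin 6) (Fin 6) ℝ :=
  !![-(2 / (Cs * R)), -(1 / Cs), 0, 1 / (Cs * R), 0, 0;
     D / L, 0, -(1 / L), 0, 0, 0;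
     0, 1 / C, P / (C * Vbar₁ ^ 2), 0, 0, 0;
     1 / (Cs * R), 0, 0, -(1 / (Cs * R)), -(1 / Cs), 0;
     0, 0, 0, D / L, 0, -(1 / L);
     0, 0, 0, 0, 1 / C, P / (C * Vbar₂ ^ 2)]

/-- Input matrix: the duty-cycle deviations enter the inductor-current rows. -/
noncomputable def inputCapB (L Vbarc₁ Vbarc₂ : ℝ) : Matrix (Fin 6) (Fin 2) ℝ :=
  !![0, 0;
     Vbarc₁ / L, 0;
     0, 0;
     0, 0;
     0, Vbarc₂ / L;
     0, 0]

/-- Block-diagonal feedback: each converter's duty cycle is a linear feedback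
of its own three states only. -/
noncomputable def blockFeedback (F₁ F₂ : Fin 3 → ℝ) : Matrix (Fin 2) (Fin 6) ℝ :=
  !![F₁ 0, F₁ 1, F₁ 2, 0, 0, 0;
     0, 0, 0, F₂ 0, F₂ 1, F₂ 2]

open Polynomial

theorem Complex.re_neg_of_sq_add_mul_add_eq_zero {b c : ℝ} (hb : 0 < b) (hc : 0 < c) {μ : ℂ}
    (h : μ ^ 2 + b * μ + c = 0) : μ.re < 0 := by
  have hre : μ.re ^ 2 - μ.im ^ 2 + b * μ.re + c = 0 := by
    simpa [sq] using congrArg Complex.re h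
  have him : μ.im * (2 * μ.re + b) = 0 := by
    linear_combination (by simpa [sq] using congrArg Complex.im h : _ = _)
  by_contra! hμ
  have him0 : μ.im = 0 := (mul_eq_zero.mp him).resolve_right (by linarith)
  rw [him0] at hre
  nlinarith

namespace Matrix

variable {m n : Type*} [Fintype m] [DecidableEq m] [Fintype n] [DecidableEq n]

theorem isHurwitz_iff_charpoly (M : Matrix n n ℝ) :
    M.IsHurwitz ↔ ∀ μ : ℂ, aeval μ M.charpoly = 0 → μ.re < 0 := by
  rw [IsHurwitz, show M.map Complex.ofReal = M.map Complex.ofRealHom from rfl]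
  simp only [mem_spectrum_iff_isRoot_charpoly, charpoly_map, IsRoot.def, eval_map, aeval_def]
  rfl

theorem isHurwitz_submatrix_equiv_iff (M : Matrix n n ℝ) (e : m ≃ n) :
    (M.submatrix e e).IsHurwitz ↔ M.IsHurwitz := by
  rw [show M.submatrix e e = reindex e.symm e.symm M from rfl, isHurwitz_iff_charpoly,
    isHurwitz_iff_charpoly, charpoly_reindex]

theorem IsHurwitz.fromBlocks_zero₂₁ {A : Matrix m m ℝ} {D : Matrix n n ℝ} (hA : A.IsHurwitz)
    (hD : D.IsHurwitz) (B : Matrix m n ℝ) : (fromBlocks A B 0 D).IsHurwitz := by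
  rw [isHurwitz_iff_charpoly] at *
  intro μ hμ
  rw [charpoly_fromBlocks_zero₂₁, map_mul, mul_eq_zero] at hμ
  exact hμ.elim (hA μ) (hD μ)

theorem isHurwitz_fin_two {M : Matrix (Fin 2) (Fin 2) ℝ} (htr : M.trace < 0) (hdet : 0 < M.det) :
    M.IsHurwitz := by
  rw [isHurwitz_iff_charpoly]
  intro μ hμ
  refine Complex.re_neg_of_sq_add_mul_add_eq_zero (neg_pos.mpr htr) hdet ?_
  simpa [charpoly_fin_two, sub_eq_add_neg] using hμ

end Matrix

/-- The first gain cancels the coupling `D / L` of the inductor current to the input-capacitor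
voltage; the other two place the converter's poles at the roots of `s² + s + 1`. -/
noncomputable def stabilizingGain (D L C p Vc : ℝ) : Fin 3 → ℝ :=
  ![-D / Vc, -(L * (1 + p)) / Vc, (1 - L * C * (p ^ 2 + p + 1)) / Vc]

noncomputable def converterBlock (C p : ℝ) : Matrix (Fin 2) (Fin 2) ℝ :=
  !![-(1 + p), -(C * (p ^ 2 + p + 1)); 1 / C, p]

noncomputable def lineBlock (Cs R : ℝ) : Matrix (Fin 2) (Fin 2) ℝ :=
  !![-(2 / (Cs * R)), 1 / (Cs * R); 1 / (Cs * R), -(1 / (Cs * R))]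

noncomputable def shuntStateOrder : Fin 2 ⊕ (Fin 2 ⊕ Fin 2) ≃ Fin 6 :=
  Equiv.ofBijective (Sum.elim ![0, 3] (Sum.elim ![1, 2] ![4, 5])) (by decide)

theorem isHurwitz_converterBlock {C : ℝ} (hC : C ≠ 0) (p : ℝ) :
    (converterBlock C p).IsHurwitz := by
  apply Matrix.isHurwitz_fin_two
  · simp [converterBlock, Matrix.trace_fin_two]
  · rw [converterBlock, Matrix.det_fin_two_of]
    field_simp
    ring_nf
    norm_num

theorem isHurwitz_lineBlock {Cs R : ℝ} (hCs : 0 < Cs) (hR : 0 < R) :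
    (lineBlock Cs R).IsHurwitz := by
  have hg : 0 < 1 / (Cs * R) := by positivity
  apply Matrix.isHurwitz_fin_two
  · rw [lineBlock, Matrix.trace_fin_two_of]
    linarith [show 2 / (Cs * R) = 2 * (1 / (Cs * R)) by ring]
  · rw [lineBlock, Matrix.det_fin_two_of]
    nlinarith [show 2 / (Cs * R) = 2 * (1 / (Cs * R)) by ring]

theorem closedLoop_submatrix_shuntStateOrder {D L C P Vbar₁ Vbar₂ Vbarc₁ Vbarc₂ : ℝ}
    (hL : L ≠ 0) (hVc₁ : Vbarc₁ ≠ 0) (hVc₂ : Vbarc₂ ≠ 0) (R Cs : ℝ) :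
    (inputCapNetwork D L C P Vbar₁ Vbar₂ R Cs + inputCapB L Vbarc₁ Vbarc₂ *
        blockFeedback (stabilizingGain D L C (P / (C * Vbar₁ ^ 2)) Vbarc₁)
          (stabilizingGain D L C (P / (C * Vbar₂ ^ 2)) Vbarc₂)).submatrix
        shuntStateOrder shuntStateOrder =
      Matrix.fromBlocks (lineBlock Cs R)
        (Matrix.fromCols !![-(1 / Cs), 0; 0, 0] !![0, 0; -(1 / Cs), 0]) 0
        (Matrix.fromBlocks (converterBlock C (P / (C * Vbar₁ ^ 2))) 0 0
          (converterBlock C (P / (C * Vbar₂ ^ 2)))) := by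
  ext (i | i | i) (j | j | j) <;> fin_cases i <;> fin_cases j <;>
    simp [shuntStateOrder, inputCapNetwork, inputCapB, blockFeedback, stabilizingGain,
      converterBlock, lineBlock] <;>
    field_simp <;> ring

theorem input_shunt_capacitor_plug_and_play_general
    (D L C P Vbar₁ Vbar₂ Vbarc₁ Vbarc₂ : ℝ)
    (hL : 0 < L) (hC : 0 < C)
    (hVc₁ : 0 < Vbarc₁) (hVc₂ : 0 < Vbarc₂) :
    ∃ F₁ F₂ : Fin 3 → ℝ, ∃ Cs > (0 : ℝ), ∀ R > (0 : ℝ),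
      Matrix.IsHurwitz (inputCapNetwork D L C P Vbar₁ Vbar₂ R Cs +
        inputCapB L Vbarc₁ Vbarc₂ * blockFeedback F₁ F₂) := by
  refine ⟨stabilizingGain D L C (P / (C * Vbar₁ ^ 2)) Vbarc₁,
    stabilizingGain D L C (P / (C * Vbar₂ ^ 2)) Vbarc₂, 1, one_pos, fun R hR => ?_⟩
  rw [← Matrix.isHurwitz_submatrix_equiv_iff _ shuntStateOrder,
    closedLoop_submatrix_shuntStateOrder hL.ne' hVc₁.ne' hVc₂.ne']
  exact (isHurwitz_lineBlock one_pos hR).fromBlocks_zero₂₁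
    ((isHurwitz_converterBlock hC.ne' _).fromBlocks_zero₂₁ (isHurwitz_converterBlock hC.ne' _) 0) _

/-- Theorem 2 (input-shunt-capacitor design, plug-and-play stability): there
exist individual feedback gains `F₁, F₂ ∈ ℝ³` and a shunt capacitance
`C_s > 0` such that the closed-loop network matrix is Hurwitz for every line
resistance `R > 0`. -/
theorem input_shunt_capacitor_plug_and_play
    (D L C P Vbar₁ Vbar₂ Vbarc₁ Vbarc₂ : ℝ) (hD : 0 < D ∧ D ≤ 1)
    (hL : 0 < L) (hC : 0 < C) (hP : 0 < P) (hV₁ : 0 < Vbar₁)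
    (hV₂ : 0 < Vbar₂) (hVc₁ : 0 < Vbarc₁) (hVc₂ : 0 < Vbarc₂) :
    ∃ F₁ F₂ : Fin 3 → ℝ, ∃ Cs > (0 : ℝ), ∀ R > (0 : ℝ),
      Matrix.IsHurwitz (inputCapNetwork D L C P Vbar₁ Vbar₂ R Cs +
        inputCapB L Vbarc₁ Vbarc₂ * blockFeedback F₁ F₂) :=
  input_shunt_capacitor_plug_and_play_general D L C P Vbar₁ Vbar₂ Vbarc₁ Vbarc₂ hL hC hVc₁ hVc₂
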